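/- arXiv:2310.02968 — 2 statements merged into one kernel-verified Lean document; each statement's English description precedes it below -/
import Mathlib

section
/- Assume $\tilde\lambda_k \leq C k^{-1-2\tilde\alpha}$ for all $k \geq 1$ with constants $C, \tilde\alpha > 0$, and let $g \in \mathcal{S}(\alpha, R)$. Choosing the threshold $K = \lceil (nm)^{1/(1+2\alpha)} \rceil$, the projection estimator $\tilde g^K$ (as in the Gaussian sequence model with noise variances $m^{-1}(\tilde\lambda_k + n^{-1})$) satisfies $\sup_{g \in \mathcal{S}(\alpha,R)} \mathbb{E}_g\|\tilde g^K - g\|_{\ell^2}^2 \leq C' \big( m^{-1} + (nm)^{-2\alpha/(1+2\alpha)} \big)$ for a constant $C'$ depending only on $C, \tilde\alpha, \alpha, R$. -/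
open MeasureTheory ProbabilityTheory Real Finset
open scoped NNReal

/-!
The risk splits exactly into a variance part `∑_{k<K} Var ε_k = m⁻¹ ∑_{k<K} λ̃_k + K/(nm)` and a
bias part `∑_{k≥K} g_k²`. The decay of `λ̃` bounds the first sum by `C ∑ k^(-1-2α̃)`, and
`K ≤ 2 (nm)^(1/(1+2α))` makes `K/(nm) ≤ 2 (nm)^(-2α/(1+2α))`; the ellipsoid constraint gives
`∑_{k≥K} g_k² ≤ K^(-2α) R² ≤ R² (nm)^(-2α/(1+2α))`.
-/

section GaussianSecondMoment

variable {Ω : Type*} {mΩ : MeasurableSpace Ω} {μ : Measure Ω} {X : Ω → ℝ} {v : ℝ≥0}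

lemma integral_sq_gaussianReal_zero (v : ℝ≥0) : ∫ x, x ^ 2 ∂gaussianReal 0 v = v := by
  rw [← variance_of_integral_eq_zero measurable_id'.aemeasurable integral_id_gaussianReal]
  exact variance_fun_id_gaussianReal

lemma integrable_sq_of_map_eq_gaussianReal (hX : Measurable X)
    (hmap : μ.map X = gaussianReal 0 v) : Integrable (fun ω => X ω ^ 2) μ := by
  have h : Integrable (fun x : ℝ => x ^ 2) (μ.map X) :=
    hmap ▸ (memLp_id_gaussianReal 2).integrable_sq
  exact (integrable_map_measure (by fun_prop) hX.aemeasurable).mp h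

lemma integral_sq_of_map_eq_gaussianReal (hX : Measurable X)
    (hmap : μ.map X = gaussianReal 0 v) : ∫ ω, X ω ^ 2 ∂μ = v := by
  rw [← integral_sq_gaussianReal_zero, ← hmap, integral_map hX.aemeasurable (by fun_prop)]

end GaussianSecondMoment

lemma tsum_sq_truncate_sub (g e : ℕ → ℝ) (K : ℕ) (hg : Summable fun k => g k ^ 2) :
    ∑' k, ((if k < K then g k + e k else 0) - g k) ^ 2
      = ∑ k ∈ range K, e k ^ 2 + ∑' k, g (k + K) ^ 2 := by
  have htail : ∀ k, ((if k + K < K then g (k + K) + e (k + K) else 0) - g (k + K)) ^ 2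
      = g (k + K) ^ 2 := fun k => by simp
  have hf : Summable fun k => ((if k < K then g k + e k else 0) - g k) ^ 2 := by
    rw [← summable_nat_add_iff K]
    simpa only [htail] using (summable_nat_add_iff K).mpr hg
  rw [← hf.sum_add_tsum_nat_add K, tsum_congr htail]
  congr 1
  exact sum_congr rfl fun k hk => by simp [mem_range.mp hk]

lemma integral_tsum_sq_truncate_sub {Ω : Type*} {mΩ : MeasurableSpace Ω} {μ : Measure Ω}
    [IsProbabilityMeasure μ] {ε : ℕ → Ω → ℝ} {v : ℕ → ℝ≥0} (hε : ∀ k, Measurable (ε k))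
    (hmap : ∀ k, μ.map (ε k) = gaussianReal 0 (v k)) {g : ℕ → ℝ}
    (hg : Summable fun k => g k ^ 2) (K : ℕ) :
    ∫ ω, ∑' k, ((if k < K then g k + ε k ω else 0) - g k) ^ 2 ∂μ
      = ∑ k ∈ range K, (v k : ℝ) + ∑' k, g (k + K) ^ 2 := by
  have hint k := integrable_sq_of_map_eq_gaussianReal (hε k) (hmap k)
  simp_rw [tsum_sq_truncate_sub g _ K hg]
  rw [integral_add (integrable_finsetSum _ fun k _ => hint k) (integrable_const _),
    integral_finsetSum _ fun k _ => hint k, integral_const, probReal_univ, one_smul]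
  simp_rw [integral_sq_of_map_eq_gaussianReal (hε _) (hmap _)]

lemma sum_range_le_mul_tsum_rpow {f : ℕ → ℝ} {c q : ℝ} (hc : 0 ≤ c) (hq : q < -1)
    (hf : ∀ k : ℕ, 1 ≤ k → f (k - 1) ≤ c * (k : ℝ) ^ q) (K : ℕ) :
    ∑ k ∈ range K, f k ≤ c * ∑' k : ℕ, ((k + 1 : ℕ) : ℝ) ^ q := by
  have hsum : Summable fun k : ℕ => ((k + 1 : ℕ) : ℝ) ^ q :=
    (summable_nat_add_iff 1).mpr (Real.summable_nat_rpow.mpr hq)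
  calc ∑ k ∈ range K, f k ≤ ∑ k ∈ range K, c * ((k + 1 : ℕ) : ℝ) ^ q :=
        sum_le_sum fun k _ => by simpa using hf (k + 1) (by omega)
    _ = c * ∑ k ∈ range K, ((k + 1 : ℕ) : ℝ) ^ q := (mul_sum _ _ _).symm
    _ ≤ c * ∑' k : ℕ, ((k + 1 : ℕ) : ℝ) ^ q :=
        mul_le_mul_of_nonneg_left (hsum.sum_le_tsum _ fun k _ => by positivity) hc

lemma sum_range_noise_variance_le {tlam : ℕ → ℝ} {c q : ℝ} {n m : ℕ} (hc : 0 ≤ c)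
    (hq : q < -1) (htlam : ∀ k, 0 < tlam k)
    (hdecay : ∀ k : ℕ, 1 ≤ k → tlam (k - 1) ≤ c * (k : ℝ) ^ q) (K : ℕ) :
    ∑ k ∈ range K, (((m : ℝ)⁻¹ * (tlam k + (n : ℝ)⁻¹)).toNNReal : ℝ)
      ≤ (m : ℝ)⁻¹ * (c * ∑' k : ℕ, ((k + 1 : ℕ) : ℝ) ^ q) + K / ((n * m : ℕ) : ℝ) := by
  have hv k : (((m : ℝ)⁻¹ * (tlam k + (n : ℝ)⁻¹)).toNNReal : ℝ)
      = (m : ℝ)⁻¹ * tlam k + (m : ℝ)⁻¹ * (n : ℝ)⁻¹ :=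
    (coe_toNNReal _ (by have := htlam k; positivity)).trans (mul_add _ _ _)
  have hK : ∑ k ∈ range K, (m : ℝ)⁻¹ * (n : ℝ)⁻¹ = K / ((n * m : ℕ) : ℝ) := by
    rw [sum_const, card_range, nsmul_eq_mul]
    push_cast
    ring
  rw [sum_congr rfl fun k _ => hv k, sum_add_distrib, ← mul_sum, hK]
  gcongr
  exact sum_range_le_mul_tsum_rpow hc hq hdecay K

lemma summable_sq_of_summable_mul_rpow {g : ℕ → ℝ} {β : ℝ} (hβ : 0 ≤ β)
    (hg : Summable fun k => g k ^ 2 * ((k + 1 : ℕ) : ℝ) ^ β) : Summable fun k => g k ^ 2 :=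
  hg.of_nonneg_of_le (fun k => sq_nonneg _) fun k =>
    le_mul_of_one_le_right (sq_nonneg _) (one_le_rpow (by norm_cast; omega) hβ)

lemma tsum_sq_nat_add_le {g : ℕ → ℝ} {β x : ℝ} {K : ℕ} (hβ : 0 ≤ β) (hx : 0 < x)
    (hxK : x ≤ K) (hg : Summable fun k => g k ^ 2 * ((k + 1 : ℕ) : ℝ) ^ β) :
    ∑' k, g (k + K) ^ 2 ≤ x ^ (-β) * ∑' k, g k ^ 2 * ((k + 1 : ℕ) : ℝ) ^ β := by
  have hshift := (summable_nat_add_iff K).mpr hg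
  have hpoint : ∀ k, g (k + K) ^ 2 ≤ x ^ (-β) * (g (k + K) ^ 2 * ((k + K + 1 : ℕ) : ℝ) ^ β) := by
    intro k
    have hweight : x ^ β ≤ ((k + K + 1 : ℕ) : ℝ) ^ β :=
      rpow_le_rpow hx.le (by push_cast; linarith [(k.cast_nonneg : (0 : ℝ) ≤ k)]) hβ
    rw [rpow_neg hx.le, inv_mul_eq_div, le_div_iff₀ (by positivity)]
    exact mul_le_mul_of_nonneg_left hweight (sq_nonneg _)
  have htail_le : ∑' k, g (k + K) ^ 2 * ((k + K + 1 : ℕ) : ℝ) ^ β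
      ≤ ∑' k, g k ^ 2 * ((k + 1 : ℕ) : ℝ) ^ β := by
    rw [← hg.sum_add_tsum_nat_add K]
    exact le_add_of_nonneg_left (sum_nonneg fun k _ => by positivity)
  calc ∑' k, g (k + K) ^ 2
      ≤ ∑' k, x ^ (-β) * (g (k + K) ^ 2 * ((k + K + 1 : ℕ) : ℝ) ^ β) :=
        ((hshift.mul_left _).of_nonneg_of_le (fun k => sq_nonneg _) hpoint).tsum_le_tsum
          hpoint (hshift.mul_left _)
    _ ≤ x ^ (-β) * ∑' k, g k ^ 2 * ((k + 1 : ℕ) : ℝ) ^ β := by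
        rw [tsum_mul_left]
        exact mul_le_mul_of_nonneg_left htail_le (by positivity)

section Threshold

variable {N a : ℝ}

lemma rpow_one_div_one_add_rpow_neg (hN : 0 ≤ N) :
    (N ^ (1 / (1 + a))) ^ (-a) = N ^ (-a / (1 + a)) := by
  rw [← rpow_mul hN]
  ring_nf

lemma natCeil_rpow_one_div_one_add_div_le (hN : 1 ≤ N) (ha : 0 ≤ a) :
    (⌈N ^ (1 / (1 + a))⌉₊ : ℝ) / N ≤ 2 * N ^ (-a / (1 + a)) := by
  have hx : 1 ≤ N ^ (1 / (1 + a)) := one_le_rpow hN (by positivity)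
  have hpow : N ^ (1 / (1 + a)) / N = N ^ (-a / (1 + a)) := by
    rw [← rpow_sub_one (by positivity)]
    congr 1
    field_simp
    ring
  calc (⌈N ^ (1 / (1 + a))⌉₊ : ℝ) / N ≤ 2 * N ^ (1 / (1 + a)) / N := by
        gcongr
        exact Nat.ceil_le_two_mul (by linarith)
    _ = 2 * N ^ (-a / (1 + a)) := by rw [mul_div_assoc, hpow]

end Threshold

-- The paper's coefficient `k ≥ 1` is index `k - 1` here.
theorem projection_estimator_rate_general (C tα α R : ℝ) (hC : 0 < C) (htα : 0 < tα)
    (hα : 0 < α) :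
    ∃ C' : ℝ, 0 < C' ∧
      ∀ (n m : ℕ), 1 ≤ n → 1 ≤ m →
      ∀ (tlam : ℕ → ℝ), (∀ k, 0 < tlam k) →
      (∀ k : ℕ, 1 ≤ k → tlam (k - 1) ≤ C * (k : ℝ) ^ (-1 - 2 * tα)) →
      ∀ (Ω : Type) (_ : MeasurableSpace Ω) (μ : Measure Ω), IsProbabilityMeasure μ →
      ∀ (ε : ℕ → Ω → ℝ), (∀ k, Measurable (ε k)) →
      iIndepFun ε μ →
      (∀ k, μ.map (ε k) =
        gaussianReal 0 (((m : ℝ)⁻¹ * (tlam k + (n : ℝ)⁻¹)).toNNReal)) →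
      ∀ (g : ℕ → ℝ),
      Summable (fun k => g k ^ 2 * ((k + 1 : ℕ) : ℝ) ^ (2 * α)) →
      (∑' k, g k ^ 2 * ((k + 1 : ℕ) : ℝ) ^ (2 * α)) ≤ R ^ 2 →
      (∫ ω, ∑' k,
          ((if k < ⌈(((n * m : ℕ) : ℝ)) ^ (1 / (1 + 2 * α))⌉₊ then g k + ε k ω else 0)
            - g k) ^ 2 ∂μ) ≤
        C' * ((m : ℝ)⁻¹ + ((n * m : ℕ) : ℝ) ^ (-(2 * α) / (1 + 2 * α))) := by
  set S := ∑' k : ℕ, ((k + 1 : ℕ) : ℝ) ^ (-1 - 2 * tα)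
  have hS : 0 ≤ C * S := mul_nonneg hC.le (tsum_nonneg fun k => by positivity)
  refine ⟨C * S + R ^ 2 + 2, by positivity, ?_⟩
  intro n m hn hm tlam htlam hdecay Ω _ μ _ ε hε _ hmap g hsum hsob
  set N : ℝ := ((n * m : ℕ) : ℝ)
  have hN : 1 ≤ N := Nat.one_le_cast.mpr (Nat.mul_pos hn hm)
  set x := N ^ (1 / (1 + 2 * α))
  set K := ⌈x⌉₊
  set rate := N ^ (-(2 * α) / (1 + 2 * α))
  have hvar : ∑ k ∈ range K, (((m : ℝ)⁻¹ * (tlam k + (n : ℝ)⁻¹)).toNNReal : ℝ)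
      ≤ (m : ℝ)⁻¹ * (C * S) + 2 * rate := by
    refine (sum_range_noise_variance_le hC.le (by linarith) htlam hdecay K).trans ?_
    gcongr
    exact natCeil_rpow_one_div_one_add_div_le hN (by positivity)
  have hbias : ∑' k, g (k + K) ^ 2 ≤ R ^ 2 * rate := by
    have hx : 1 ≤ x := one_le_rpow hN (by positivity)
    calc ∑' k, g (k + K) ^ 2 ≤ x ^ (-(2 * α)) * R ^ 2 :=
          (tsum_sq_nat_add_le (by positivity) (by positivity) (Nat.le_ceil x) hsum).trans
            (mul_le_mul_of_nonneg_left hsob (by positivity))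
      _ = R ^ 2 * rate := by rw [rpow_one_div_one_add_rpow_neg (by positivity), mul_comm]
  rw [integral_tsum_sq_truncate_sub hε hmap
    (summable_sq_of_summable_mul_rpow (by positivity) hsum)]
  have hrate : 0 ≤ rate := by positivity
  have hm_inv : 0 ≤ (m : ℝ)⁻¹ := by positivity
  calc _ ≤ (m : ℝ)⁻¹ * (C * S) + 2 * rate + R ^ 2 * rate := by linarith
    _ ≤ (C * S + R ^ 2 + 2) * ((m : ℝ)⁻¹ + rate) := by
        nlinarith [mul_nonneg (add_nonneg hS (sq_nonneg R)) hrate,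
          mul_nonneg (add_nonneg (sq_nonneg R) zero_le_two) hm_inv]

/-- With `λ̃ₖ ≤ C k^(-1-2ᾱ)` and threshold `K = ⌈(nm)^(1/(1+2α))⌉`, the projection
estimator in the Gaussian sequence model attains the rate `m⁻¹ + (nm)^(-2α/(1+2α))`
uniformly over the Sobolev ellipsoid (coefficients indexed from 1, Lean index `k` is
coefficient `k+1`); the constant `C'` depends only on `C, ᾱ, α, R`. -/
theorem projection_estimator_rate (C tα α R : ℝ) (hC : 0 < C) (htα : 0 < tα)
    (hα : 0 < α) (hR : 0 < R) :
    ∃ C' : ℝ, 0 < C' ∧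
      ∀ (n m : ℕ), 1 ≤ n → 1 ≤ m →
      ∀ (tlam : ℕ → ℝ), (∀ k, 0 < tlam k) →
      (∀ k : ℕ, 1 ≤ k → tlam (k - 1) ≤ C * (k : ℝ) ^ (-1 - 2 * tα)) →
      ∀ (Ω : Type) (_ : MeasurableSpace Ω) (μ : Measure Ω), IsProbabilityMeasure μ →
      ∀ (ε : ℕ → Ω → ℝ), (∀ k, Measurable (ε k)) →
      iIndepFun ε μ →
      (∀ k, μ.map (ε k) =
        gaussianReal 0 (((m : ℝ)⁻¹ * (tlam k + (n : ℝ)⁻¹)).toNNReal)) →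
      ∀ (g : ℕ → ℝ),
      Summable (fun k => g k ^ 2 * ((k + 1 : ℕ) : ℝ) ^ (2 * α)) →
      (∑' k, g k ^ 2 * ((k + 1 : ℕ) : ℝ) ^ (2 * α)) ≤ R ^ 2 →
      (∫ ω, ∑' k,
          ((if k < ⌈(((n * m : ℕ) : ℝ)) ^ (1 / (1 + 2 * α))⌉₊ then g k + ε k ω else 0)
            - g k) ^ 2 ∂μ) ≤
        C' * ((m : ℝ)⁻¹ + ((n * m : ℕ) : ℝ) ^ (-(2 * α) / (1 + 2 * α))) :=
  projection_estimator_rate_general C tα α R hC htα hα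
end

section
/- Let $Z_1, Z_2, \ldots$ be i.i.d. standard Gaussians, let $\tilde\lambda_k \leq C k^{-1-2\tilde\alpha}$ be decreasing, and fix integers $k_2 > k_2^* \geq 1$ with $\sum_{k > k_2^*} \tilde\lambda_k \leq k_2^*/(nm)$. Then for any $\tau_2 > 6$ there exist constants $c, c' > 0$ (depending on $\tau_2, C, \tilde\alpha$) such that, provided $k_2^* \geq c'\, n^{1/(1+2\tilde\alpha)}$, $\sum_{\ell = k_2+1}^{\lfloor\sqrt{nm}\rfloor} \mathbb{P}\Big(\sum_{k=k_2+1}^{\ell} \big(\tilde\lambda_k + \tfrac1n\big) Z_k^2 > \tfrac{\tau_2 - 2}{2}\cdot\tfrac{\ell}{n}\Big) \leq \tfrac1c e^{-c k_2^*}$. -/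
open MeasureTheory ProbabilityTheory Real Finset

/-!
A Chernoff bound. For a standard Gaussian `Z` and `u ≤ 1/4`,
`𝔼 exp (u Z²) = (1 - 2u)^(-1/2) ≤ exp (u + 4u²)`, so for independent standard Gaussians `Z k` and
weights `0 ≤ γ k ≤ b` the tail of `∑ γ k * Z k ^ 2` at `t` is at most
`exp (-θ t + θ (1 + 4θb) ∑ γ k)` whenever `θ b ≤ 1/4`.

Past `k₂*` the decay `λ̃ₖ ≤ C k^(-1-2ᾱ)` together with `k₂* ≥ c' n^(1/(1+2ᾱ))` forces `λ̃ₖ ≤ 1/n`,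
so the weights `λ̃ₖ + 1/n` lie in `[0, 2/n]` and the `ℓ`-th sum has mean at most `2ℓ/n`, which the
threshold `(τ₂ - 2)/2 · ℓ/n` exceeds by a fixed multiple of `ℓ/n` since `τ₂ > 6`. With `θ = εn`
each probability is then at most `exp (-c₀ ℓ)`, and the geometric series over `ℓ > k₂*` is
`O(exp (-c₀ k₂*))`.
-/

lemma gaussianPDFReal_mul_exp_mul_sq (a x : ℝ) :
    gaussianPDFReal 0 1 x * exp (a * x ^ 2) = (√(2 * π))⁻¹ * exp (-(1 / 2 - a) * x ^ 2) := by
  rw [gaussianPDFReal_def, mul_assoc, ← exp_add]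
  congr 2 <;> simp only [NNReal.coe_one, mul_one, sub_zero]; ring

lemma integrable_exp_mul_sq_gaussianReal {a : ℝ} (ha : a < 1 / 2) :
    Integrable (fun x => exp (a * x ^ 2)) (gaussianReal 0 1) := by
  rw [gaussianReal_of_var_ne_zero 0 one_ne_zero,
    integrable_withDensity_iff_integrable_smul' (measurable_gaussianPDF 0 1)
      (ae_of_all _ fun _ => gaussianPDF_lt_top)]
  simp only [toReal_gaussianPDF, smul_eq_mul, gaussianPDFReal_mul_exp_mul_sq]
  exact (integrable_exp_neg_mul_sq (by linarith)).const_mul _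

lemma integral_exp_mul_sq_gaussianReal {a : ℝ} (ha : a < 1 / 2) :
    ∫ x, exp (a * x ^ 2) ∂gaussianReal 0 1 = (√(1 - 2 * a))⁻¹ := by
  rw [integral_gaussianReal_eq_integral_smul one_ne_zero]
  simp only [smul_eq_mul, gaussianPDFReal_mul_exp_mul_sq]
  rw [integral_const_mul, integral_gaussian, ← sqrt_inv, ← sqrt_mul (by positivity), ← sqrt_inv]
  congr 1
  have : 1 / 2 - a ≠ 0 := by linarith
  field_simp

lemma inv_sqrt_one_sub_two_mul_le_exp {u : ℝ} (hu : u ≤ 1 / 4) :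
    (√(1 - 2 * u))⁻¹ ≤ exp (u + 4 * u ^ 2) := by
  have hpos : 0 < 1 - 2 * u := by linarith
  -- `(1 - 2u) (1 + 2u + 8u²) = 1 + 4u² (1 - 4u)`
  have hinv : (1 - 2 * u)⁻¹ ≤ 1 + (2 * u + 8 * u ^ 2) := by
    rw [inv_le_iff_one_le_mul₀' hpos]; nlinarith
  have hlog : -(2 * u + 8 * u ^ 2) ≤ log (1 - 2 * u) := by
    linarith [one_sub_inv_le_log_of_pos hpos]
  rw [← exp_log hpos, sqrt_eq_rpow, ← exp_mul, ← exp_neg, exp_le_exp]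
  linarith

section

variable {Ω ι : Type*} [MeasurableSpace Ω] {μ : Measure Ω} {X : Ω → ℝ}

lemma integrable_exp_mul_sq_of_map_eq_gaussianReal (hX : Measurable X)
    (hmap : μ.map X = gaussianReal 0 1) {a : ℝ} (ha : a < 1 / 2) :
    Integrable (fun ω => exp (a * X ω ^ 2)) μ := by
  have h := integrable_exp_mul_sq_gaussianReal ha
  rw [← hmap, integrable_map_measure (by fun_prop) hX.aemeasurable] at h
  exact h

lemma mgf_sq_of_map_eq_gaussianReal (hX : Measurable X)
    (hmap : μ.map X = gaussianReal 0 1) {a : ℝ} (ha : a < 1 / 2) :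
    mgf (fun ω => X ω ^ 2) μ a = (√(1 - 2 * a))⁻¹ := by
  rw [← integral_exp_mul_sq_gaussianReal ha, ← hmap,
    integral_map hX.aemeasurable (by fun_prop), mgf]

lemma mgf_mul_sq_le_of_map_eq_gaussianReal (hX : Measurable X)
    (hmap : μ.map X = gaussianReal 0 1) {γ b θ : ℝ} (hγ : 0 ≤ γ) (hγb : γ ≤ b) (hθ : 0 ≤ θ)
    (hθb : θ * b ≤ 1 / 4) :
    mgf (fun ω => γ * X ω ^ 2) μ θ ≤ exp (θ * (1 + 4 * θ * b) * γ) := by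
  have hu : γ * θ ≤ θ * b := by nlinarith
  rw [mgf_const_mul, mgf_sq_of_map_eq_gaussianReal hX hmap (by linarith)]
  refine (inv_sqrt_one_sub_two_mul_le_exp (by linarith)).trans (exp_le_exp.mpr ?_)
  nlinarith [mul_nonneg hγ hθ]

theorem measureReal_sum_mul_sq_ge_le {Z : ι → Ω → ℝ} (hZ : ∀ k, Measurable (Z k))
    (hind : iIndepFun Z μ) (hmap : ∀ k, μ.map (Z k) = gaussianReal 0 1) {S : Finset ι}
    {γ : ι → ℝ} {b θ : ℝ} (hγ : ∀ k ∈ S, 0 ≤ γ k) (hγb : ∀ k ∈ S, γ k ≤ b) (hθ : 0 ≤ θ)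
    (hθb : θ * b ≤ 1 / 4) (t : ℝ) :
    μ.real {ω | t ≤ ∑ k ∈ S, γ k * Z k ω ^ 2}
      ≤ exp (-θ * t + θ * (1 + 4 * θ * b) * ∑ k ∈ S, γ k) := by
  have := hind.isProbabilityMeasure
  set Y : ι → Ω → ℝ := fun k ω => γ k * Z k ω ^ 2
  have hY : ∀ k, Measurable (Y k) := fun k => by fun_prop
  have hYind : iIndepFun Y μ := hind.comp (fun k x => γ k * x ^ 2) fun k => by fun_prop
  have hint : ∀ k ∈ S, Integrable (fun ω => exp (θ * Y k ω)) μ := fun k hk => by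
    simp_rw [Y, ← mul_assoc]
    exact integrable_exp_mul_sq_of_map_eq_gaussianReal (hZ k) (hmap k) (by nlinarith [hγb k hk])
  calc μ.real {ω | t ≤ ∑ k ∈ S, γ k * Z k ω ^ 2}
      = μ.real {ω | t ≤ (∑ k ∈ S, Y k) ω} := by simp only [Finset.sum_apply, Y]
    _ ≤ exp (-θ * t) * ∏ k ∈ S, mgf (Y k) μ θ := by
      rw [← hYind.mgf_sum hY]
      exact measure_ge_le_exp_mul_mgf t hθ (hYind.integrable_exp_mul_sum hY hint)
    _ ≤ exp (-θ * t) * ∏ k ∈ S, exp (θ * (1 + 4 * θ * b) * γ k) := by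
      gcongr with k hk
      · exact fun k _ => mgf_nonneg
      · exact mgf_mul_sq_le_of_map_eq_gaussianReal (hZ k) (hmap k) (hγ k hk) (hγb k hk) hθ hθb
    _ = exp (-θ * t + θ * (1 + 4 * θ * b) * ∑ k ∈ S, γ k) := by
      rw [← exp_sum, ← exp_add, mul_sum]

theorem measureReal_overshoot_le {Z : ι → Ω → ℝ} (hZ : ∀ k, Measurable (Z k))
    (hind : iIndepFun Z μ) (hmap : ∀ k, μ.map (Z k) = gaussianReal 0 1) {S : Finset ι}
    {γ : ι → ℝ} {n ε τ ℓ : ℝ} (hn : 0 < n) (hε : 0 ≤ ε) (hε₁ : 8 * ε ≤ 1)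
    (hετ : 64 * ε ≤ τ - 6) (hγ : ∀ k ∈ S, 0 ≤ γ k) (hγn : ∀ k ∈ S, γ k ≤ 2 / n)
    (hS : (#S : ℝ) ≤ ℓ) :
    μ.real {ω | (τ - 2) / 2 * (ℓ / n) < ∑ k ∈ S, γ k * Z k ω ^ 2}
      ≤ exp (-(ε * (τ - 6) / 4) * ℓ) := by
  have := hind.isProbabilityMeasure
  have hθb : ε * n * (2 / n) = 2 * ε := by field_simp
  have hsum : ∑ k ∈ S, γ k ≤ 2 * ℓ / n := by
    calc ∑ k ∈ S, γ k ≤ #S • (2 / n) := sum_le_card_nsmul _ _ _ hγn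
      _ ≤ 2 * ℓ / n := by
        rw [nsmul_eq_mul, mul_div_assoc', mul_comm]
        gcongr
  have hℓ : 0 ≤ ℓ := (Nat.cast_nonneg _).trans hS
  calc μ.real {ω | (τ - 2) / 2 * (ℓ / n) < ∑ k ∈ S, γ k * Z k ω ^ 2}
      ≤ μ.real {ω | (τ - 2) / 2 * (ℓ / n) ≤ ∑ k ∈ S, γ k * Z k ω ^ 2} :=
        measureReal_mono (Set.ofPred_subset_ofPred.mpr fun _ => le_of_lt)
    _ ≤ exp (-(ε * n) * ((τ - 2) / 2 * (ℓ / n))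
          + ε * n * (1 + 4 * (ε * n) * (2 / n)) * ∑ k ∈ S, γ k) :=
        measureReal_sum_mul_sq_ge_le hZ hind hmap hγ hγn (by positivity) (by rw [hθb]; linarith) _
    _ ≤ exp (-(ε * (τ - 6) / 4) * ℓ) := by
      rw [exp_le_exp, mul_assoc 4, hθb]
      calc -(ε * n) * ((τ - 2) / 2 * (ℓ / n)) + ε * n * (1 + 4 * (2 * ε)) * ∑ k ∈ S, γ k
          ≤ -(ε * n) * ((τ - 2) / 2 * (ℓ / n)) + ε * n * (1 + 4 * (2 * ε)) * (2 * ℓ / n) := by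
            gcongr
        _ = ε * ℓ * (16 * ε - (τ - 6) / 2) := by field_simp; ring
        _ ≤ -(ε * (τ - 6) / 4) * ℓ := by nlinarith [mul_nonneg hε hℓ]

end

lemma mul_rpow_neg_le_inv {C p N x : ℝ} (hp : 0 < p) (hN : 0 < N)
    (hx : max C 1 ^ (1 / p) * N ^ (1 / p) ≤ x) : C * x ^ (-p) ≤ N⁻¹ := by
  have hM : 0 < max C 1 := lt_max_of_lt_right one_pos
  have hx0 : 0 ≤ x := (mul_nonneg (rpow_nonneg hM.le _) (rpow_nonneg hN.le _)).trans hx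
  have hMN : max C 1 * N ≤ x ^ p := by
    rwa [← mul_rpow hM.le hN.le, one_div,
      rpow_inv_le_iff_of_pos (mul_pos hM hN).le hx0 hp] at hx
  calc C * x ^ (-p) ≤ max C 1 * (x ^ p)⁻¹ := by
        rw [rpow_neg hx0]
        gcongr
        exact le_max_left _ _
    _ ≤ max C 1 * (max C 1 * N)⁻¹ := by gcongr
    _ = N⁻¹ := by field_simp

lemma sum_Icc_exp_neg_mul_le {c₀ c : ℝ} (hc : 0 < c) (hc₀ : c ≤ c₀)
    (hc₁ : c ≤ 1 - exp (-c₀)) {a lo hi : ℕ} (ha : a ≤ lo) :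
    ∑ ℓ ∈ Icc lo hi, exp (-c₀ * ℓ) ≤ c⁻¹ * exp (-c * a) := by
  have hr : exp (-c₀) < 1 := by linarith
  have hpow : exp (-c₀) ^ lo ≤ exp (-c * a) := by
    rw [← exp_nat_mul, exp_le_exp]
    have : (a : ℝ) ≤ lo := by exact_mod_cast ha
    nlinarith [(Nat.cast_nonneg a : (0 : ℝ) ≤ a)]
  calc ∑ ℓ ∈ Icc lo hi, exp (-c₀ * ℓ) = ∑ ℓ ∈ Ico lo (hi + 1), exp (-c₀) ^ ℓ := by
        rw [Ico_add_one_right_eq_Icc]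
        refine sum_congr rfl fun ℓ _ => ?_
        rw [← exp_nat_mul, mul_comm]
    _ ≤ exp (-c₀) ^ lo / (1 - exp (-c₀)) := geom_sum_Ico_le_of_lt_one (exp_pos _).le hr
    _ ≤ exp (-c * a) / c := div_le_div₀ (exp_pos _).le hpow hc hc₁
    _ = c⁻¹ * exp (-c * a) := div_eq_inv_mul _ _

theorem lepskii_overshoot_bound_general (C tα τ₂ : ℝ) (htα : 0 < tα)
    (hτ : 6 < τ₂) :
    ∃ c : ℝ, 0 < c ∧ ∃ c' : ℝ, 0 < c' ∧
      ∀ (n m : ℕ), 1 ≤ n → 1 ≤ m →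
      ∀ (tlam : ℕ → ℝ), (∀ k, 1 ≤ k → 0 ≤ tlam k) →
        (∀ k : ℕ, 1 ≤ k → tlam k ≤ C * (k : ℝ) ^ (-1 - 2 * tα)) →
        (∀ j k : ℕ, 1 ≤ j → j ≤ k → tlam k ≤ tlam j) →
      ∀ (k₂star k₂ : ℕ), 1 ≤ k₂star → k₂star < k₂ →
        (∑' j : ℕ, tlam (k₂star + 1 + j)) ≤ (k₂star : ℝ) / ((n : ℝ) * m) →
        c' * (n : ℝ) ^ (1 / (1 + 2 * tα)) ≤ (k₂star : ℝ) →
      ∀ (Ω : Type) (_ : MeasurableSpace Ω) (μ : Measure Ω), IsProbabilityMeasure μ →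
      ∀ (Z : ℕ → Ω → ℝ), (∀ k, Measurable (Z k)) →
        iIndepFun Z μ →
        (∀ k, μ.map (Z k) = gaussianReal 0 1) →
      (∑ ℓ ∈ Finset.Icc (k₂ + 1) (Nat.sqrt (n * m)),
          (μ {ω | (τ₂ - 2) / 2 * ((ℓ : ℝ) / n) <
            ∑ k ∈ Finset.Icc (k₂ + 1) ℓ, (tlam k + (n : ℝ)⁻¹) * (Z k ω) ^ 2}).toReal)
        ≤ c⁻¹ * Real.exp (-c * k₂star) := by
  set ε : ℝ := min (τ₂ - 6) 1 / 64 with hε_def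
  set c₀ : ℝ := ε * (τ₂ - 6) / 4
  have hε : 0 < ε := div_pos (lt_min (by linarith) one_pos) (by norm_num)
  have hc₀ : 0 < c₀ := by positivity
  have hc : 0 < min c₀ (1 - exp (-c₀)) :=
    lt_min hc₀ (sub_pos.mpr (exp_lt_one_iff.mpr (neg_neg_of_pos hc₀)))
  refine ⟨_, hc, max C 1 ^ (1 / (1 + 2 * tα)), rpow_pos_of_pos (lt_max_of_lt_right one_pos) _, ?_⟩
  intro n m hn _ tlam htlam0 htlamC _ k₂star k₂ _ hk₂ _ hk Ω _ μ _ Z hZ hind hmap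
  have hn0 : (0 : ℝ) < n := by exact_mod_cast hn
  have htail : ∀ k, k₂star < k → tlam k ≤ (n : ℝ)⁻¹ := fun k hk' => by
    refine (htlamC k (by omega)).trans ?_
    rw [← neg_add']
    exact mul_rpow_neg_le_inv (by linarith) hn0 (hk.trans (by exact_mod_cast hk'.le))
  have hbeyond : ∀ ℓ, ∀ k ∈ Icc (k₂ + 1) ℓ, k₂star < k := fun ℓ k hk => by
    have := (mem_Icc.mp hk).1
    omega
  calc _ ≤ ∑ ℓ ∈ Icc (k₂ + 1) (Nat.sqrt (n * m)), exp (-c₀ * ℓ) := by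
        refine sum_le_sum fun ℓ _ => measureReal_overshoot_le hZ hind hmap hn0 hε.le
          (by linarith [min_le_right (τ₂ - 6) 1]) (by linarith [min_le_left (τ₂ - 6) 1])
          (fun k hk' => ?_) (fun k hk' => ?_) ?_
        · exact add_nonneg (htlam0 k (by linarith [hbeyond ℓ k hk'])) (by positivity)
        · have := htail k (hbeyond ℓ k hk')
          rw [div_eq_mul_inv]
          linarith
        · rw [Nat.card_Icc]
          exact_mod_cast (by omega : ℓ + 1 - (k₂ + 1) ≤ ℓ)
    _ ≤ _ := sum_Icc_exp_neg_mul_le hc (min_le_left _ _) (min_le_right _ _) (by omega)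

/-- Overshoot probability bound for the Lepskii-type data-driven threshold: for i.i.d.
standard Gaussians `Z` and decreasing `λ̃ₖ ≤ C k^(-1-2ᾱ)` with `∑_{k>k₂*} λ̃ₖ ≤ k₂*/(nm)`,
if `k₂* ≥ c' n^(1/(1+2ᾱ))` then
`∑_{ℓ=k₂+1}^{⌊√(nm)⌋} P(∑_{k=k₂+1}^{ℓ}(λ̃ₖ + 1/n) Zₖ² > ((τ₂-2)/2)·ℓ/n) ≤ c⁻¹ e^{-c k₂*}`.
(Here `λ̃` is indexed directly from 1.) -/
theorem lepskii_overshoot_bound (C tα τ₂ : ℝ) (hC : 0 < C) (htα : 0 < tα)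
    (hτ : 6 < τ₂) :
    ∃ c : ℝ, 0 < c ∧ ∃ c' : ℝ, 0 < c' ∧
      ∀ (n m : ℕ), 1 ≤ n → 1 ≤ m →
      ∀ (tlam : ℕ → ℝ), (∀ k, 1 ≤ k → 0 ≤ tlam k) →
        (∀ k : ℕ, 1 ≤ k → tlam k ≤ C * (k : ℝ) ^ (-1 - 2 * tα)) →
        (∀ j k : ℕ, 1 ≤ j → j ≤ k → tlam k ≤ tlam j) →
      ∀ (k₂star k₂ : ℕ), 1 ≤ k₂star → k₂star < k₂ →
        (∑' j : ℕ, tlam (k₂star + 1 + j)) ≤ (k₂star : ℝ) / ((n : ℝ) * m) →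
        c' * (n : ℝ) ^ (1 / (1 + 2 * tα)) ≤ (k₂star : ℝ) →
      ∀ (Ω : Type) (_ : MeasurableSpace Ω) (μ : Measure Ω), IsProbabilityMeasure μ →
      ∀ (Z : ℕ → Ω → ℝ), (∀ k, Measurable (Z k)) →
        iIndepFun Z μ →
        (∀ k, μ.map (Z k) = gaussianReal 0 1) →
      (∑ ℓ ∈ Finset.Icc (k₂ + 1) (Nat.sqrt (n * m)),
          (μ {ω | (τ₂ - 2) / 2 * ((ℓ : ℝ) / n) <
            ∑ k ∈ Finset.Icc (k₂ + 1) ℓ, (tlam k + (n : ℝ)⁻¹) * (Z k ω) ^ 2}).toReal)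
        ≤ c⁻¹ * Real.exp (-c * k₂star) :=
  lepskii_overshoot_bound_general C tα τ₂ htα hτ
end
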